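/- Under the hypotheses: ε continuous with 1 < ε(z) ≤ E on γ = [−2πδ, 2πδ], q₀ = 2πδκ/cos φ with (E−1)q₀ < 1, a√(αq₀) < (2/(3√3))(1 − (E−1)q₀)^{3/2}, p ∈ (p₁, p₂) (where p₁ < p₂ are the positive zeros of αq₀p³ − (1−(E−1)q₀)p + a), and q₀(E − 1 + 3αp²) < 1, the map T(U) = −AU + αF(U) + f maps the closed ball S_p of C(γ) into itself and is a contraction, hence has a unique fixed point U* in S_p. -/

import Mathlib

/-!
Write `T U = -A U + α F U + f` where `A` and `F` integrate the kernel of modulus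
`κ / (2 cos φ)` against `(1 - ε) U` and `‖U‖² U` over the layer `γ` of length `4πδ`; hence
`‖A U‖ ≤ q₀ (E - 1) ‖U‖` and `‖F U‖ ≤ q₀ ‖U‖³`. On the ball `S_p` this gives
`‖T U‖ ≤ q₀ (E - 1) p + α q₀ p³ + a`, which is `≤ p` exactly where the cubic
`α q₀ p³ - (1 - (E - 1) q₀) p + a` is nonpositive, i.e. between its positive roots. Since
`‖‖u‖² u - ‖v‖² v‖ ≤ 3 p² ‖u - v‖` on the ball, `T` is Lipschitz there with constant
`q₀ (E - 1 + 3 α p²) < 1`, and Banach's fixed point theorem in the closed ball of `C(γ)` gives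
the unique fixed point.
-/

/-- The nonlinear operator `T(U) = −AU + αF(U) + f` of the diffraction problem, with
kernel `k(t) = (iκ/(2cosφ))e^{2iκcos(φ)|t|}`, weight `1 − ε`, Kerr cubic nonlinearity,
and incident field `f(z) = a·e^{−iκcosφ(z−2πδ)}`. -/
noncomputable def Tmap (δ κ α a φ : ℝ) (ε : ℝ → ℝ) (U : ℝ → ℂ) (z : ℝ) : ℂ :=
  -(∫ z₀ in (-(2 * Real.pi * δ))..(2 * Real.pi * δ),
      (Complex.I * κ / (2 * Real.cos φ)) *
        Complex.exp (2 * Complex.I * κ * Real.cos φ * |z - z₀|) *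
        ((1 - ε z₀ : ℝ) : ℂ) * U z₀)
  + α * (∫ z₀ in (-(2 * Real.pi * δ))..(2 * Real.pi * δ),
      (Complex.I * κ / (2 * Real.cos φ)) *
        Complex.exp (2 * Complex.I * κ * Real.cos φ * |z - z₀|) *
        ((‖U z₀‖ ^ 2 : ℝ) : ℂ) * U z₀)
  + a * Complex.exp (-Complex.I * κ * Real.cos φ * (z - 2 * Real.pi * δ))

open Set MeasureTheory

section FixedPoint

variable {X E : Type*} [TopologicalSpace X] [NormedAddCommGroup E] {s : Set X}

noncomputable def extendOn (u : C(s, E)) : X → E := Function.extend Subtype.val u 0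

lemma extendOn_apply (u : C(s, E)) (x : s) : extendOn u x = u x :=
  Subtype.val_injective.extend_apply _ _ x

lemma continuousOn_extendOn (u : C(s, E)) : ContinuousOn (extendOn u) s :=
  continuousOn_iff_continuous_domRestrict.2 <| by
    convert u.continuous using 1
    exact Function.extend_comp Subtype.val_injective _ _

variable [CompactSpace s]

lemma norm_extendOn_le {u : C(s, E)} {p : ℝ} (hu : ‖u‖ ≤ p) {z : X} (hz : z ∈ s) :
    ‖extendOn u z‖ ≤ p :=
  extendOn_apply u ⟨z, hz⟩ ▸ (u.norm_coe_le_norm _).trans hu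

lemma norm_extendOn_sub_le (u v : C(s, E)) {z : X} (hz : z ∈ s) :
    ‖extendOn u z - extendOn v z‖ ≤ dist u v := by
  rw [extendOn_apply u ⟨z, hz⟩, extendOn_apply v ⟨z, hz⟩, ← dist_eq_norm]
  exact u.dist_apply_le_dist _

theorem exists_unique_fixedPoint_of_contractingOn_ball [CompleteSpace E]
    {T : (X → E) → X → E} {p K : ℝ} (hp : 0 ≤ p) (hK₀ : 0 ≤ K) (hK : K < 1)
    (hcongr : ∀ U V, EqOn U V s → EqOn (T U) (T V) s)
    (hcont : ∀ U, ContinuousOn U s → ContinuousOn (T U) s)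
    (hmaps : ∀ U, ContinuousOn U s → (∀ z ∈ s, ‖U z‖ ≤ p) → ∀ z ∈ s, ‖T U z‖ ≤ p)
    (hlip : ∀ U V, ContinuousOn U s → ContinuousOn V s → (∀ z ∈ s, ‖U z‖ ≤ p) →
      (∀ z ∈ s, ‖V z‖ ≤ p) → ∀ M : ℝ, (∀ z ∈ s, ‖U z - V z‖ ≤ M) →
      ∀ z ∈ s, ‖T U z - T V z‖ ≤ K * M) :
    ∃ U, ContinuousOn U s ∧ (∀ z ∈ s, ‖U z‖ ≤ p) ∧ (∀ z ∈ s, U z = T U z) ∧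
      ∀ V, ContinuousOn V s → (∀ z ∈ s, ‖V z‖ ≤ p) → (∀ z ∈ s, V z = T V z) →
        ∀ z ∈ s, V z = U z := by
  let B := Metric.closedBall (0 : C(s, E)) p
  have mem_B {u : C(s, E)} : u ∈ B ↔ ∀ x, ‖u x‖ ≤ p := by
    rw [mem_closedBall_zero_iff, ContinuousMap.norm_le u hp]
  have : CompleteSpace B := Metric.isClosed_closedBall.completeSpace_coe
  have : Nonempty B := ⟨⟨0, Metric.mem_closedBall_self hp⟩⟩
  let Φ : B → B := fun u => ⟨⟨s.domRestrict (T (extendOn u.1)),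
      (hcont _ (continuousOn_extendOn _)).domRestrict⟩,
    mem_B.2 fun x => hmaps _ (continuousOn_extendOn _)
      (fun _ => norm_extendOn_le (mem_closedBall_zero_iff.1 u.2)) x x.2⟩
  have hΦ : ContractingWith ⟨K, hK₀⟩ Φ := by
    refine ⟨hK, LipschitzWith.of_dist_le_mul fun u v => ?_⟩
    refine (ContinuousMap.dist_le (by positivity)).2 fun x => ?_
    rw [dist_eq_norm]
    exact hlip _ _ (continuousOn_extendOn _) (continuousOn_extendOn _)
      (fun _ => norm_extendOn_le (mem_closedBall_zero_iff.1 u.2))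
      (fun _ => norm_extendOn_le (mem_closedBall_zero_iff.1 v.2))
      _ (fun _ => norm_extendOn_sub_le u.1 v.1) x x.2
  set u := ContractingWith.fixedPoint Φ hΦ
  refine ⟨extendOn u.1, continuousOn_extendOn _,
    fun _ => norm_extendOn_le (mem_closedBall_zero_iff.1 u.2), fun z hz => ?_, ?_⟩
  · rw [extendOn_apply u.1 ⟨z, hz⟩]
    exact congr($(hΦ.fixedPoint_isFixedPt).1 ⟨z, hz⟩).symm
  · intro V hV hVp hVfix z hz
    let v : B := ⟨⟨s.domRestrict V, hV.domRestrict⟩, mem_B.2 fun x => hVp x x.2⟩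
    have hv : EqOn (extendOn v.1) V s := fun x hx => extendOn_apply v.1 ⟨x, hx⟩
    have hvfix : Function.IsFixedPt Φ v := Subtype.ext <| ContinuousMap.ext fun x =>
      (hcongr _ _ hv x.2).trans (hVfix x x.2).symm
    rw [extendOn_apply u.1 ⟨z, hz⟩, ← show v = u from hΦ.fixedPoint_unique hvfix]
    rfl

end FixedPoint

noncomputable def greenKernel (κ c t : ℝ) : ℂ :=
  Complex.I * κ / (2 * c) * Complex.exp (2 * Complex.I * κ * c * |t|)

noncomputable def greenOp (κ c a b : ℝ) (W : ℝ → ℂ) (z : ℝ) : ℂ :=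
  ∫ z₀ in a..b, greenKernel κ c (z - z₀) * W z₀

section GreenOperator

variable {κ c a b : ℝ} {W V : ℝ → ℂ}

lemma norm_greenKernel (κ c t : ℝ) : ‖greenKernel κ c t‖ = |κ / (2 * c)| := by
  simp [greenKernel, Complex.norm_exp, abs_div]

lemma continuous_greenKernel (κ c : ℝ) : Continuous (greenKernel κ c) := by
  unfold greenKernel; fun_prop

lemma norm_greenOp_le (hab : a ≤ b) {C : ℝ} (hW : ∀ z₀ ∈ Icc a b, ‖W z₀‖ ≤ C) (z : ℝ) :
    ‖greenOp κ c a b W z‖ ≤ |κ / (2 * c)| * C * (b - a) := by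
  have := intervalIntegral.norm_integral_le_of_norm_le_const (C := |κ / (2 * c)| * C)
    (f := fun z₀ => greenKernel κ c (z - z₀) * W z₀) fun z₀ hz₀ => by
      rw [norm_mul, norm_greenKernel]
      exact mul_le_mul_of_nonneg_left (hW z₀ (Ioc_subset_Icc_self (uIoc_of_le hab ▸ hz₀)))
        (abs_nonneg _)
  rwa [abs_of_nonneg (sub_nonneg.2 hab)] at this

lemma greenOp_congr (hab : a ≤ b) (h : EqOn W V (Icc a b)) :
    greenOp κ c a b W = greenOp κ c a b V := by
  ext z
  refine intervalIntegral.integral_congr fun z₀ hz₀ => ?_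
  simp only [h (uIcc_of_le hab ▸ hz₀)]

lemma intervalIntegrable_greenKernel_mul (hab : a ≤ b) (hW : ContinuousOn W (Icc a b))
    (z : ℝ) : IntervalIntegrable (fun z₀ => greenKernel κ c (z - z₀) * W z₀) volume a b :=
  ContinuousOn.intervalIntegrable <| uIcc_of_le hab ▸
    ((continuous_greenKernel κ c).comp (continuous_sub_left z)).continuousOn.mul hW

lemma greenOp_sub (hab : a ≤ b) (hW : ContinuousOn W (Icc a b))
    (hV : ContinuousOn V (Icc a b)) (z : ℝ) :
    greenOp κ c a b W z - greenOp κ c a b V z = greenOp κ c a b (W - V) z := by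
  simp only [greenOp, Pi.sub_apply, mul_sub]
  exact (intervalIntegral.integral_sub (intervalIntegrable_greenKernel_mul hab hW z)
    (intervalIntegrable_greenKernel_mul hab hV z)).symm

/-- The integral only sees `W` on `[a, b]`, so we may replace `W` by a globally continuous
extension and integrate a jointly continuous integrand. -/
lemma continuous_greenOp (hab : a ≤ b) (hW : ContinuousOn W (Icc a b)) :
    Continuous (greenOp κ c a b W) := by
  rw [greenOp_congr hab fun x hx => (IccExtend_of_mem hab ((Icc a b).domRestrict W) hx).symm]
  exact intervalIntegral.continuous_parametric_intervalIntegral_of_continuous'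
    (((continuous_greenKernel κ c).comp continuous_sub).mul
      (hW.domRestrict.Icc_extend'.comp continuous_snd)) a b

end GreenOperator

lemma norm_sq_smul_sub_sq_smul_le {E : Type*} [SeminormedAddCommGroup E] [NormedSpace ℝ E]
    {u v : E} {p : ℝ} (hu : ‖u‖ ≤ p) (hv : ‖v‖ ≤ p) :
    ‖‖u‖ ^ 2 • u - ‖v‖ ^ 2 • v‖ ≤ 3 * p ^ 2 * ‖u - v‖ := by
  have hp : 0 ≤ p := (norm_nonneg u).trans hu
  have hsq : |‖u‖ ^ 2 - ‖v‖ ^ 2| ≤ 2 * p * ‖u - v‖ := by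
    rw [sq_sub_sq, abs_mul, abs_of_nonneg (by positivity)]
    gcongr
    · linarith
    · exact abs_norm_sub_norm_le u v
  calc ‖‖u‖ ^ 2 • u - ‖v‖ ^ 2 • v‖ = ‖‖u‖ ^ 2 • (u - v) + (‖u‖ ^ 2 - ‖v‖ ^ 2) • v‖ := by
        rw [smul_sub, sub_smul]; abel_nf
    _ ≤ ‖u‖ ^ 2 * ‖u - v‖ + |‖u‖ ^ 2 - ‖v‖ ^ 2| * ‖v‖ := by
        refine (norm_add_le _ _).trans_eq ?_
        rw [norm_smul, norm_smul, Real.norm_eq_abs, Real.norm_eq_abs, abs_of_nonneg (by positivity)]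
    _ ≤ p ^ 2 * ‖u - v‖ + 2 * p * ‖u - v‖ * p := by gcongr
    _ = 3 * p ^ 2 * ‖u - v‖ := by ring

/-- Having no quadratic term, the cubic has third root `-(p₁ + p₂)`, so it factors as
`b (x - p₁) (x - p₂) (x + p₁ + p₂)`. -/
lemma cubic_nonpos_of_mem_Ioo {b c d p₁ p₂ p : ℝ} (hb : 0 ≤ b) (hp₁ : 0 ≤ p₁)
    (h₁ : b * p₁ ^ 3 - c * p₁ + d = 0) (h₂ : b * p₂ ^ 3 - c * p₂ + d = 0)
    (hp : p ∈ Ioo p₁ p₂) :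
    b * p ^ 3 - c * p + d ≤ 0 := by
  obtain ⟨hp₁p, hpp₂⟩ := hp
  have hc : c = b * (p₁ ^ 2 + p₁ * p₂ + p₂ ^ 2) := by
    have h : (p₁ - p₂) * (b * (p₁ ^ 2 + p₁ * p₂ + p₂ ^ 2) - c) = 0 := by
      linear_combination h₁ - h₂
    linarith [(mul_eq_zero.1 h).resolve_left (by linarith)]
  have hfactor : b * p ^ 3 - c * p + d = b * ((p - p₁) * (p - p₂) * (p + p₁ + p₂)) := by
    subst hc; linear_combination h₁
  rw [hfactor]
  refine mul_nonpos_of_nonneg_of_nonpos hb (mul_nonpos_of_nonpos_of_nonneg ?_ (by linarith))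
  exact mul_nonpos_of_nonneg_of_nonpos (by linarith) (by linarith)

lemma norm_ofReal_one_sub_mul_le {e E C : ℝ} {w : ℂ} (he : 1 ≤ e) (heE : e ≤ E) (hw : ‖w‖ ≤ C) :
    ‖((1 - e : ℝ) : ℂ) * w‖ ≤ (E - 1) * C := by
  rw [norm_mul, Complex.norm_real, Real.norm_eq_abs, abs_of_nonpos (by linarith)]
  exact mul_le_mul (by linarith) hw (norm_nonneg w) (by linarith)

lemma norm_ofReal_sq_mul_le {u : ℂ} {p : ℝ} (hu : ‖u‖ ≤ p) :
    ‖((‖u‖ ^ 2 : ℝ) : ℂ) * u‖ ≤ p ^ 3 := by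
  rw [norm_mul, Complex.norm_real, norm_pow, norm_norm, ← pow_succ]
  exact pow_le_pow_left₀ (norm_nonneg u) hu 3

section Layer

variable {δ κ α a E φ q₀ p : ℝ} {ε : ℝ → ℝ} {U V : ℝ → ℂ}

lemma two_pi_mul_div_cos_nonneg (hδ : 0 ≤ δ) (hκ : 0 ≤ κ) (hφ : |φ| < Real.pi / 2) :
    0 ≤ 2 * Real.pi * δ * κ / Real.cos φ :=
  div_nonneg (by positivity) (Real.cos_pos_of_mem_Ioo (abs_lt.1 hφ)).le

lemma Tmap_eq_greenOp (U : ℝ → ℂ) (z : ℝ) : Tmap δ κ α a φ ε U z =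
    -greenOp κ (Real.cos φ) (-(2 * Real.pi * δ)) (2 * Real.pi * δ)
        (fun z₀ => ((1 - ε z₀ : ℝ) : ℂ) * U z₀) z
      + α * greenOp κ (Real.cos φ) (-(2 * Real.pi * δ)) (2 * Real.pi * δ)
        (fun z₀ => ((‖U z₀‖ ^ 2 : ℝ) : ℂ) * U z₀) z
      + a * Complex.exp (-Complex.I * κ * Real.cos φ * (z - 2 * Real.pi * δ)) := by
  simp only [Tmap, greenOp, greenKernel, mul_assoc]

lemma norm_incident (ha : 0 ≤ a) (z : ℝ) :
    ‖(a : ℂ) * Complex.exp (-Complex.I * κ * Real.cos φ * (z - 2 * Real.pi * δ))‖ = a := by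
  simp [Complex.norm_exp, abs_of_nonneg ha]

lemma norm_greenOp_layer_le (hδ : 0 ≤ δ) (hκ : 0 ≤ κ) (hφ : |φ| < Real.pi / 2)
    (hq₀ : q₀ = 2 * Real.pi * δ * κ / Real.cos φ) {W : ℝ → ℂ} {C : ℝ}
    (hW : ∀ z₀ ∈ Icc (-(2 * Real.pi * δ)) (2 * Real.pi * δ), ‖W z₀‖ ≤ C) (z : ℝ) :
    ‖greenOp κ (Real.cos φ) (-(2 * Real.pi * δ)) (2 * Real.pi * δ) W z‖ ≤ q₀ * C := by
  have hcos : 0 < Real.cos φ := Real.cos_pos_of_mem_Ioo (abs_lt.1 hφ)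
  refine (norm_greenOp_le (neg_le_self (by positivity)) hW z).trans_eq ?_
  rw [abs_of_nonneg (by positivity), hq₀]
  field_simp
  ring

lemma norm_Tmap_le (hδ : 0 ≤ δ) (hκ : 0 ≤ κ) (hα : 0 ≤ α) (ha : 0 ≤ a)
    (hφ : |φ| < Real.pi / 2) (hq₀ : q₀ = 2 * Real.pi * δ * κ / Real.cos φ)
    (hε₁ : ∀ z ∈ Icc (-(2 * Real.pi * δ)) (2 * Real.pi * δ), 1 ≤ ε z)
    (hεE : ∀ z ∈ Icc (-(2 * Real.pi * δ)) (2 * Real.pi * δ), ε z ≤ E)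
    {p₁ p₂ : ℝ} (hp₁ : 0 ≤ p₁)
    (hz₁ : α * q₀ * p₁ ^ 3 - (1 - (E - 1) * q₀) * p₁ + a = 0)
    (hz₂ : α * q₀ * p₂ ^ 3 - (1 - (E - 1) * q₀) * p₂ + a = 0) (hp : p ∈ Ioo p₁ p₂)
    (hU : ∀ z ∈ Icc (-(2 * Real.pi * δ)) (2 * Real.pi * δ), ‖U z‖ ≤ p) (z : ℝ) :
    ‖Tmap δ κ α a φ ε U z‖ ≤ p := by
  have hA := norm_greenOp_layer_le hδ hκ hφ hq₀ (fun z₀ hz₀ =>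
    norm_ofReal_one_sub_mul_le (hε₁ z₀ hz₀) (hεE z₀ hz₀) (hU z₀ hz₀)) z
  have hF := norm_greenOp_layer_le hδ hκ hφ hq₀ (fun z₀ hz₀ => norm_ofReal_sq_mul_le (hU z₀ hz₀)) z
  have hcubic := cubic_nonpos_of_mem_Ioo
    (mul_nonneg hα (hq₀ ▸ two_pi_mul_div_cos_nonneg hδ hκ hφ)) hp₁ hz₁ hz₂ hp
  rw [Tmap_eq_greenOp]
  set A := greenOp κ (Real.cos φ) (-(2 * Real.pi * δ)) (2 * Real.pi * δ)
  calc _ ≤ ‖A (fun z₀ => ((1 - ε z₀ : ℝ) : ℂ) * U z₀) z‖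
        + α * ‖A (fun z₀ => ((‖U z₀‖ ^ 2 : ℝ) : ℂ) * U z₀) z‖ + a := by
        refine (norm_add₃_le).trans_eq ?_
        rw [norm_neg, norm_mul, Complex.norm_real, Real.norm_of_nonneg hα, norm_incident ha]
    _ ≤ q₀ * ((E - 1) * p) + α * (q₀ * p ^ 3) + a := by gcongr
    _ ≤ p := by linarith

lemma norm_Tmap_sub_le (hδ : 0 ≤ δ) (hκ : 0 ≤ κ) (hα : 0 ≤ α) (hφ : |φ| < Real.pi / 2)
    (hq₀ : q₀ = 2 * Real.pi * δ * κ / Real.cos φ) (hε : Continuous ε)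
    (hε₁ : ∀ z ∈ Icc (-(2 * Real.pi * δ)) (2 * Real.pi * δ), 1 ≤ ε z)
    (hεE : ∀ z ∈ Icc (-(2 * Real.pi * δ)) (2 * Real.pi * δ), ε z ≤ E)
    (hU : ContinuousOn U (Icc (-(2 * Real.pi * δ)) (2 * Real.pi * δ)))
    (hV : ContinuousOn V (Icc (-(2 * Real.pi * δ)) (2 * Real.pi * δ)))
    (hUp : ∀ z ∈ Icc (-(2 * Real.pi * δ)) (2 * Real.pi * δ), ‖U z‖ ≤ p)
    (hVp : ∀ z ∈ Icc (-(2 * Real.pi * δ)) (2 * Real.pi * δ), ‖V z‖ ≤ p) {M : ℝ}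
    (hM : ∀ z ∈ Icc (-(2 * Real.pi * δ)) (2 * Real.pi * δ), ‖U z - V z‖ ≤ M) (z : ℝ) :
    ‖Tmap δ κ α a φ ε U z - Tmap δ κ α a φ ε V z‖ ≤ q₀ * (E - 1 + 3 * α * p ^ 2) * M := by
  have hγ : -(2 * Real.pi * δ) ≤ 2 * Real.pi * δ := neg_le_self (by positivity)
  rw [Tmap_eq_greenOp, Tmap_eq_greenOp]
  set A := greenOp κ (Real.cos φ) (-(2 * Real.pi * δ)) (2 * Real.pi * δ)
  have hA : ‖A (fun z₀ => ((1 - ε z₀ : ℝ) : ℂ) * U z₀) z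
      - A (fun z₀ => ((1 - ε z₀ : ℝ) : ℂ) * V z₀) z‖ ≤ q₀ * ((E - 1) * M) := by
    rw [greenOp_sub hγ (by fun_prop) (by fun_prop)]
    refine norm_greenOp_layer_le hδ hκ hφ hq₀ (fun z₀ hz₀ => ?_) z
    rw [Pi.sub_apply, ← mul_sub]
    exact norm_ofReal_one_sub_mul_le (hε₁ z₀ hz₀) (hεE z₀ hz₀) (hM z₀ hz₀)
  have hF : ‖A (fun z₀ => ((‖U z₀‖ ^ 2 : ℝ) : ℂ) * U z₀) z
      - A (fun z₀ => ((‖V z₀‖ ^ 2 : ℝ) : ℂ) * V z₀) z‖ ≤ q₀ * (3 * p ^ 2 * M) := by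
    rw [greenOp_sub hγ (by fun_prop) (by fun_prop)]
    refine norm_greenOp_layer_le hδ hκ hφ hq₀ (fun z₀ hz₀ => ?_) z
    rw [Pi.sub_apply, ← Complex.real_smul, ← Complex.real_smul]
    exact (norm_sq_smul_sub_sq_smul_le (hUp z₀ hz₀) (hVp z₀ hz₀)).trans
      (by gcongr; exact hM z₀ hz₀)
  calc _ = ‖-(A (fun z₀ => ((1 - ε z₀ : ℝ) : ℂ) * U z₀) z
          - A (fun z₀ => ((1 - ε z₀ : ℝ) : ℂ) * V z₀) z)
        + α * (A (fun z₀ => ((‖U z₀‖ ^ 2 : ℝ) : ℂ) * U z₀) z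
          - A (fun z₀ => ((‖V z₀‖ ^ 2 : ℝ) : ℂ) * V z₀) z)‖ := by congr 1; ring
    _ ≤ q₀ * ((E - 1) * M) + α * (q₀ * (3 * p ^ 2 * M)) := by
        refine (norm_add_le _ _).trans ?_
        rw [norm_neg, norm_mul, Complex.norm_real, Real.norm_of_nonneg hα]
        gcongr
    _ = q₀ * (E - 1 + 3 * α * p ^ 2) * M := by ring

lemma Tmap_congr (hδ : 0 ≤ δ) (h : EqOn U V (Icc (-(2 * Real.pi * δ)) (2 * Real.pi * δ))) :
    Tmap δ κ α a φ ε U = Tmap δ κ α a φ ε V := by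
  have hγ : -(2 * Real.pi * δ) ≤ 2 * Real.pi * δ := neg_le_self (by positivity)
  ext z
  rw [Tmap_eq_greenOp, Tmap_eq_greenOp]
  congr 3 <;> exact congrFun (greenOp_congr hγ fun z₀ hz₀ => by simp only [h hz₀]) z

lemma continuous_Tmap (hδ : 0 ≤ δ) (hε : Continuous ε)
    (hU : ContinuousOn U (Icc (-(2 * Real.pi * δ)) (2 * Real.pi * δ))) :
    Continuous (Tmap δ κ α a φ ε U) := by
  have hγ : -(2 * Real.pi * δ) ≤ 2 * Real.pi * δ := neg_le_self (by positivity)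
  rw [funext (Tmap_eq_greenOp U)]
  exact ((continuous_greenOp hγ (by fun_prop)).neg.add
    (continuous_const.mul (continuous_greenOp hγ (by fun_prop)))).add (by fun_prop)

end Layer

theorem stmt_8 (δ κ α a E φ : ℝ)
    (hδ : 0 < δ) (hκ : 0 < κ) (hα : 0 < α) (ha : 0 < a) (hE : 1 < E)
    (hφ : |φ| < Real.pi / 2)
    (q₀ : ℝ) (hq₀ : q₀ = 2 * Real.pi * δ * κ / Real.cos φ)
    (ε : ℝ → ℝ) (hε : Continuous ε)
    (hεb : ∀ z ∈ Set.Icc (-(2 * Real.pi * δ)) (2 * Real.pi * δ), 1 < ε z ∧ ε z ≤ E)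
    (p₁ p₂ p : ℝ) (hp₁ : 0 < p₁)
    (hz₁ : α * q₀ * p₁ ^ 3 - (1 - (E - 1) * q₀) * p₁ + a = 0)
    (hz₂ : α * q₀ * p₂ ^ 3 - (1 - (E - 1) * q₀) * p₂ + a = 0)
    (hp : p ∈ Set.Ioo p₁ p₂)
    (ht₀ : q₀ * (E - 1 + 3 * α * p ^ 2) < 1) :
    (∀ U : ℝ → ℂ, ContinuousOn U (Set.Icc (-(2 * Real.pi * δ)) (2 * Real.pi * δ)) →
      (∀ z ∈ Set.Icc (-(2 * Real.pi * δ)) (2 * Real.pi * δ), ‖U z‖ ≤ p) →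
      ∀ z ∈ Set.Icc (-(2 * Real.pi * δ)) (2 * Real.pi * δ), ‖Tmap δ κ α a φ ε U z‖ ≤ p) ∧
    (∀ U V : ℝ → ℂ,
      ContinuousOn U (Set.Icc (-(2 * Real.pi * δ)) (2 * Real.pi * δ)) →
      ContinuousOn V (Set.Icc (-(2 * Real.pi * δ)) (2 * Real.pi * δ)) →
      (∀ z ∈ Set.Icc (-(2 * Real.pi * δ)) (2 * Real.pi * δ), ‖U z‖ ≤ p) →
      (∀ z ∈ Set.Icc (-(2 * Real.pi * δ)) (2 * Real.pi * δ), ‖V z‖ ≤ p) →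
      ∀ M : ℝ, (∀ z ∈ Set.Icc (-(2 * Real.pi * δ)) (2 * Real.pi * δ), ‖U z - V z‖ ≤ M) →
      ∀ z ∈ Set.Icc (-(2 * Real.pi * δ)) (2 * Real.pi * δ),
        ‖Tmap δ κ α a φ ε U z - Tmap δ κ α a φ ε V z‖ ≤
          q₀ * (E - 1 + 3 * α * p ^ 2) * M) ∧
    (∃ U : ℝ → ℂ, ContinuousOn U (Set.Icc (-(2 * Real.pi * δ)) (2 * Real.pi * δ)) ∧
      (∀ z ∈ Set.Icc (-(2 * Real.pi * δ)) (2 * Real.pi * δ), ‖U z‖ ≤ p) ∧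
      (∀ z ∈ Set.Icc (-(2 * Real.pi * δ)) (2 * Real.pi * δ), U z = Tmap δ κ α a φ ε U z) ∧
      ∀ V : ℝ → ℂ, ContinuousOn V (Set.Icc (-(2 * Real.pi * δ)) (2 * Real.pi * δ)) →
        (∀ z ∈ Set.Icc (-(2 * Real.pi * δ)) (2 * Real.pi * δ), ‖V z‖ ≤ p) →
        (∀ z ∈ Set.Icc (-(2 * Real.pi * δ)) (2 * Real.pi * δ), V z = Tmap δ κ α a φ ε V z) →
        ∀ z ∈ Set.Icc (-(2 * Real.pi * δ)) (2 * Real.pi * δ), V z = U z) := by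
  have hε₁ z hz : 1 ≤ ε z := (hεb z hz).1.le
  have hεE z hz : ε z ≤ E := (hεb z hz).2
  have hK : 0 ≤ q₀ * (E - 1 + 3 * α * p ^ 2) :=
    mul_nonneg (hq₀ ▸ two_pi_mul_div_cos_nonneg hδ.le hκ.le hφ)
      (add_nonneg (by linarith) (by positivity))
  refine ⟨?maps, ?lipschitz, exists_unique_fixedPoint_of_contractingOn_ball (hp₁.trans hp.1).le hK
    ht₀ (fun U V h z _ => by rw [Tmap_congr hδ.le h])
    (fun U hU => (continuous_Tmap hδ.le hε hU).continuousOn) ?maps ?lipschitz⟩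
  case maps =>
    exact fun U _ hU z _ =>
      norm_Tmap_le hδ.le hκ.le hα.le ha.le hφ hq₀ hε₁ hεE hp₁.le hz₁ hz₂ hp hU z
  case lipschitz =>
    exact fun U V hU hV hUp hVp M hM z _ =>
      norm_Tmap_sub_le hδ.le hκ.le hα.le hφ hq₀ hε hε₁ hεE hU hV hUp hVp hM z
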